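/- Let $k$ be a perfect field of characteristic $p > 0$, and let $V, W$ be finite-dimensional $k$-vector spaces equipped with $p$-linear endomorphisms $F_V: V \to V$ and $F_W: W \to W$. If the induced $p$-linear endomorphism $F_V \otimes F_W$ on $V \otimes_k W$ is bijective, then $F_V$ is bijective (provided $W \neq 0$). -/

import Mathlib

/-!
Pick `w ≠ 0` in `W`. If `F_V x = F_V y` then `G (x ⊗ w) = G (y ⊗ w)`, so `x ⊗ w = y ⊗ w` and
hence `x = y`, since `· ⊗ w` has a left inverse built from a functional not vanishing on `w`.
Thus `F_V` is injective, and an injective Frobenius-semilinear endomorphism of a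
finite-dimensional space over a perfect field is surjective: it maps a basis to a linearly
independent family, because the Frobenius of `k` is onto, and a linearly independent family of
`dim V` vectors spans `V`.
-/

open TensorProduct

theorem TensorProduct.tmul_left_injective {k V W : Type*} [Field k]
    [AddCommGroup V] [Module k V] [AddCommGroup W] [Module k W] {w : W} (hw : w ≠ 0) :
    Function.Injective (· ⊗ₜ[k] w : V → V ⊗[k] W) := by
  obtain ⟨f, hf⟩ : ∃ f : Module.Dual k W, f w ≠ 0 := by
    by_contra! h
    exact hw ((Module.forall_dual_apply_eq_zero_iff k w).mp h)
  have h_recover : ∀ v : V, TensorProduct.rid k V (LinearMap.lTensor V f (v ⊗ₜ w)) = f w • v :=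
    fun v ↦ by simp
  intro x y hxy
  apply smul_right_injective V hf
  simpa only [h_recover] using congrArg (fun t ↦ TensorProduct.rid k V (LinearMap.lTensor V f t)) hxy

theorem injective_of_injective_of_map_tmul {k V V' W W' : Type*} [Field k]
    [AddCommGroup V] [Module k V] [AddCommGroup V'] [Module k V']
    [AddCommGroup W] [Module k W] [AddCommGroup W'] [Module k W'] [Nontrivial W]
    {FV : V → V'} {FW : W → W'} {G : V ⊗[k] W → V' ⊗[k] W'}
    (hG : ∀ v w, G (v ⊗ₜ w) = FV v ⊗ₜ FW w) (hinj : Function.Injective G) :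
    Function.Injective FV := by
  obtain ⟨w, hw⟩ := exists_ne (0 : W)
  intro x y hxy
  exact TensorProduct.tmul_left_injective hw (hinj (by rw [hG, hG, hxy]))

theorem LinearMap.surjective_of_injective_of_finiteDimensional {K V : Type*} [Field K]
    [AddCommGroup V] [Module K V] [FiniteDimensional K V] {σ : K →+* K} [RingHomSurjective σ]
    (f : V →ₛₗ[σ] V) (hf : Function.Injective f) : Function.Surjective f := by
  let b := Module.finBasis K V
  have hli : LinearIndependent K (f ∘ b) :=
    b.linearIndependent.map_of_surjective_injectiveₛ σ f.toAddMonoidHom σ.surjective hf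
      (map_smulₛₗ f)
  have hspan : Submodule.span K (Set.range (f ∘ b)) = ⊤ :=
    hli.span_eq_top_of_card_eq_finrank' (by simp)
  rw [← LinearMap.range_eq_top, eq_top_iff, ← hspan, Submodule.span_le]
  rintro _ ⟨i, rfl⟩
  exact LinearMap.mem_range_self f (b i)

theorem bijective_of_tensor_bijective_general {k V W : Type*} [Field k] (p : ℕ)
    [Fact (Nat.Prime p)] [CharP k p] [PerfectRing k p]
    [AddCommGroup V] [Module k V] [AddCommGroup W] [Module k W]
    [FiniteDimensional k V] [Nontrivial W]
    (FV : V → V) (hVadd : ∀ x y : V, FV (x + y) = FV x + FV y)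
    (hVsmul : ∀ (c : k) (x : V), FV (c • x) = c ^ p • FV x)
    (FW : W → W)
    (G : V ⊗[k] W → V ⊗[k] W)
    (hG : ∀ (v : V) (w : W), G (v ⊗ₜ[k] w) = FV v ⊗ₜ[k] FW w)
    (hbij : Function.Bijective G) :
    Function.Bijective FV := by
  have hinj : Function.Injective FV := injective_of_injective_of_map_tmul hG hbij.1
  have : RingHomSurjective (frobenius k p) := ⟨(bijective_frobenius k p).2⟩
  let F : V →ₛₗ[frobenius k p] V :=
    { toFun := FV
      map_add' := hVadd
      map_smul' := fun c x ↦ by rw [hVsmul, frobenius_def] }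
  exact ⟨hinj, F.surjective_of_injective_of_finiteDimensional hinj⟩

/-- Let `k` be a perfect field of characteristic `p > 0` and `V`, `W`
finite-dimensional `k`-vector spaces with `p`-linear endomorphisms `F_V`, `F_W`.
If the induced `p`-linear endomorphism `F_V ⊗ F_W` on `V ⊗ₖ W` (determined by
`v ⊗ w ↦ F_V v ⊗ F_W w`) is bijective and `W ≠ 0`, then `F_V` is bijective. -/
theorem bijective_of_tensor_bijective {k V W : Type*} [Field k] (p : ℕ)
    [Fact (Nat.Prime p)] [CharP k p] [PerfectRing k p]
    [AddCommGroup V] [Module k V] [AddCommGroup W] [Module k W]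
    [FiniteDimensional k V] [FiniteDimensional k W] [Nontrivial W]
    (FV : V → V) (hVadd : ∀ x y : V, FV (x + y) = FV x + FV y)
    (hVsmul : ∀ (c : k) (x : V), FV (c • x) = c ^ p • FV x)
    (FW : W → W) (hWadd : ∀ x y : W, FW (x + y) = FW x + FW y)
    (hWsmul : ∀ (c : k) (x : W), FW (c • x) = c ^ p • FW x)
    (G : V ⊗[k] W → V ⊗[k] W)
    (hGadd : ∀ x y : V ⊗[k] W, G (x + y) = G x + G y)
    (hGsmul : ∀ (c : k) (x : V ⊗[k] W), G (c • x) = c ^ p • G x)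
    (hG : ∀ (v : V) (w : W), G (v ⊗ₜ[k] w) = FV v ⊗ₜ[k] FW w)
    (hbij : Function.Bijective G) :
    Function.Bijective FV :=
  bijective_of_tensor_bijective_general p FV hVadd hVsmul FW G hG hbij
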